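/- If α = n/m is rational (m ≥ 1) and β is arbitrary, then the system (T², φ, Lebesgue) is not weakly mixing: the Koopman operator U has a nonconstant eigenfunction with eigenvalue of modulus 1. -/

import Mathlib

open MeasureTheory Finset

/-- The step function `θ` on the circle: `1` on `[0,1/2)`, `-1` on `[1/2,1)`. -/
noncomputable def triTheta (q : AddCircle (1:ℝ)) : ℝ :=
  if ((AddCircle.equivIco 1 0 q : ℝ)) < 1/2 then 1 else -1

/-- The triangle map `φ(q,p) = (q+p+αθ(q)+β, p+αθ(q)+β)` on the torus. -/
noncomputable def triMap (α β : ℝ) :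
    AddCircle (1:ℝ) × AddCircle (1:ℝ) → AddCircle (1:ℝ) × AddCircle (1:ℝ) :=
  fun x => (x.1 + x.2 + ((α * triTheta x.1 + β : ℝ) : AddCircle (1:ℝ)),
            x.2 + ((α * triTheta x.1 + β : ℝ) : AddCircle (1:ℝ)))

/-! Since `α = n/m`, the kick `αθ(q)` in the momentum lies in `(1/m)ℤ` and is killed by the
character `p ↦ e^{2πimp}`; hence `e_{0,m}(q,p) = e^{2πimp}` satisfies `e_{0,m} ∘ φ = e^{2πimβ} e_{0,m}`,
and it is nonconstant because `m ≠ 0`. -/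

section Fourier

variable {T : ℝ}

theorem fourier_apply_add (n : ℤ) (x y : AddCircle T) :
    fourier n (x + y) = fourier n x * fourier n y := by
  simp only [fourier_apply, zsmul_add, AddCircle.toCircle_add, Circle.coe_mul]

theorem fourier_apply_eq_one_of_zsmul_eq_zero {n : ℤ} {y : AddCircle T} (hy : n • y = 0) :
    fourier n y = 1 := by
  rw [fourier_apply, hy, AddCircle.toCircle_zero, Circle.coe_one]

theorem norm_fourier_apply (n : ℤ) (x : AddCircle T) : ‖fourier n x‖ = 1 := by
  rw [fourier_apply]
  exact Circle.norm_coe _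

theorem fourier_ne_const (hT : 0 < T) {n : ℤ} (hn : n ≠ 0) :
    ¬ ∃ z : ℂ, ∀ x : AddCircle T, fourier n x = z := by
  rintro ⟨z, hz⟩
  have h := fourier_add_half_inv_index hn hT 0
  rw [hz, hz] at h
  have hz1 : z = 1 := by rw [← hz 0, fourier_eval_zero]
  norm_num [hz1] at h

end Fourier

theorem triTheta_eq_one_or_neg_one (q : AddCircle (1:ℝ)) : triTheta q = 1 ∨ triTheta q = -1 := by
  unfold triTheta
  split_ifs <;> simp

theorem zsmul_coe_mul_triTheta_eq_zero {α : ℝ} {n : ℤ} {m : ℕ} (hα : (m : ℝ) * α = n)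
    (q : AddCircle (1:ℝ)) : (m : ℤ) • ((α * triTheta q : ℝ) : AddCircle (1:ℝ)) = 0 := by
  rw [← AddCircle.coe_zsmul, AddCircle.coe_eq_zero_iff]
  rcases triTheta_eq_one_or_neg_one q with h | h
  · exact ⟨n, by simp [h, ← hα]⟩
  · exact ⟨-n, by simp [h, ← hα]⟩

theorem fourier_snd_triMap {α : ℝ} (β : ℝ) {n : ℤ} {m : ℕ} (hα : (m : ℝ) * α = n)
    (x : AddCircle (1:ℝ) × AddCircle (1:ℝ)) :
    fourier m (triMap α β x).2 = fourier m (β : AddCircle (1:ℝ)) * fourier m x.2 := by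
  simp only [triMap, AddCircle.coe_add, fourier_apply_add,
    fourier_apply_eq_one_of_zsmul_eq_zero (zsmul_coe_mul_triTheta_eq_zero hα x.1)]
  ring

/-- If `α = n/m` is rational, the triangle map is not weakly mixing: its Koopman
operator has a nonconstant (measurable) eigenfunction with unimodular eigenvalue. -/
theorem triMap_not_weakMixing (α β : ℝ) (n : ℤ) (m : ℕ) (hm : 1 ≤ m)
    (hα : α = (n : ℝ) / m) :
    ∃ (f : AddCircle (1:ℝ) × AddCircle (1:ℝ) → ℂ) (c : ℂ),
      Measurable f ∧ ‖c‖ = 1 ∧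
      (∀ x, f (triMap α β x) = c * f x) ∧
      ¬ ∃ z : ℂ, ∀ x, f x = z := by
  have hmα : (m : ℝ) * α = n := by
    rw [hα]
    field_simp
  refine ⟨fun x => fourier m x.2, fourier m (β : AddCircle (1:ℝ)),
    (fourier _).continuous.measurable.comp measurable_snd, norm_fourier_apply _ _,
    fourier_snd_triMap β hmα, ?_⟩
  rintro ⟨z, hz⟩
  refine fourier_ne_const one_pos (n := m) (by omega) ⟨z, fun p => ?_⟩
  exact hz (0, p)
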